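/- For toric diagram #9 of the 16 reflexive polygons, the minimized volume is (11 + 5√5)/108, attained at (b₁, b₂) = (6 − 3√5, 0). -/
import Mathlib


/-- The volume function of reflexive polygon #9, with `b₃ = 3`. -/
noncomputable def V9 (b₁ b₂ : ℝ) : ℝ :=
  2 * (27 - b₂ ^ 2 - 3 * b₁) /
    ((b₁ + 3) * (3 + b₂ - b₁) * (3 - b₂) * (b₂ + 3) * (3 - b₁ - b₂))

/-- For toric diagram #9, the minimized volume is `(11 + 5√5)/108`, attained at
`(b₁, b₂) = (6 − 3√5, 0)`. -/
theorem volume_min_9 :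
    (∀ b₁ b₂ : ℝ, 0 < b₁ + 3 → 0 < 3 + b₂ - b₁ → 0 < 3 - b₂ → 0 < b₂ + 3 →
      0 < 3 - b₁ - b₂ →
      (11 + 5 * Real.sqrt 5) / 108 ≤ V9 b₁ b₂) ∧
    V9 (6 - 3 * Real.sqrt 5) 0 = (11 + 5 * Real.sqrt 5) / 108 := by
  have hs : Real.sqrt 5 ^ 2 = 5 := Real.sq_sqrt (by norm_num)
  set s := Real.sqrt 5 with hsdef
  have hs0 : 0 ≤ s := Real.sqrt_nonneg 5
  have hs22 : (2.2 : ℝ) < s := by nlinarith [hs, hs0]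
  constructor
  · intro b₁ b₂ h1 h2 h3 h4 h5
    have hx3 : b₁ < 3 := by linarith
    have hD : 0 < (b₁ + 3) * (3 + b₂ - b₁) * (3 - b₂) * (b₂ + 3) * (3 - b₁ - b₂) :=
      mul_pos (mul_pos (mul_pos (mul_pos h1 h2) h3) h4) h5
    rw [V9, div_le_div_iff₀ (by norm_num) hD]
    have hT1 : 0 ≤ (3 - b₂) * (b₂ + 3) * (b₁ - 6 + 3 * s) ^ 2 * (6 * s - 9 - b₁) := by
      have : 0 < 6 * s - 9 - b₁ := by nlinarith
      positivity
    have hT2 : 0 ≤ b₂ ^ 2 * (810 * s - 1782) * (6 - b₁) := by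
      have : 0 < 810 * s - 1782 := by nlinarith
      have : 0 < 6 - b₁ := by linarith
      positivity
    have hT3 : 0 ≤ (b₁ + 3) * b₂ ^ 2 * (3 - b₂) * (b₂ + 3) := by positivity
    have hm : 0 < 11 + 5 * s := by linarith
    have key : 216 * (27 - b₂ ^ 2 - 3 * b₁) -
        (11 + 5 * s) * ((b₁ + 3) * (3 + b₂ - b₁) * (3 - b₂) * (b₂ + 3) * (3 - b₁ - b₂)) =
        (11 + 5 * s) *
          ((3 - b₂) * (b₂ + 3) * (b₁ - 6 + 3 * s) ^ 2 * (6 * s - 9 - b₁) +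
            b₂ ^ 2 * (810 * s - 1782) * (6 - b₁) / 9 +
            (b₁ + 3) * b₂ ^ 2 * (3 - b₂) * (b₂ + 3)) := by
      linear_combination ((-7047) + 8019 * s + (-2430) * s ^ 2 + (-1917) * b₂ ^ 2
        + (-891) * b₂ ^ 2 * s + 270 * b₂ ^ 2 * s ^ 2 + 1377 * b₁ + (-1215) * b₁ * s
        + 297 * b₁ * b₂ ^ 2 + 135 * b₁ * b₂ ^ 2 * s) * hs
    nlinarith [mul_nonneg hm.le hT1, mul_nonneg hm.le hT2, mul_nonneg hm.le hT3]
  · rw [V9]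
    rw [div_eq_div_iff (by nlinarith) (by norm_num)]
    ring_nf
    nlinarith [hs]
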